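/- Let T>0, N a positive natural number, h = T/N, and for s ∈ [0,T] let τ_s = h·⌊s/h⌋. Let f : [0,T] → [0,∞) be bounded and suppose there are constants κ, λ ≥ 0 and exponents a₁, a₂ ∈ [0,1) such that for all t ∈ [0,T], f(t) ≤ κ + λ · t^{a₁} · ∫_h^{max(h,t)} f(τ_s) · s^{-a₁} · (t-s)^{-a₂} ds. Then there exists a constant C depending only on λ, a₁, a₂, T (but not on h, N, κ, or f) such that sup_{t∈[0,T]} f(t) ≤ C·κ. -/
import Mathlib

open MeasureTheory Set intervalIntegral

private lemma gronwall_beta_aux (a b t : ℝ) (ha0 : 0 ≤ a) (ha1 : a < 1) (hb0 : 0 ≤ b)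
    (hb1 : b < 1) (ht : 0 < t) :
    IntervalIntegrable (fun s : ℝ => s ^ (-a) * (t - s) ^ (-b)) volume 0 t ∧
    (∫ s in (0:ℝ)..t, s ^ (-a) * (t - s) ^ (-b)) ≤ (t/2) ^ (1-a-b) * (1/(1-a) + 1/(1-b)) := by
  have hm : 0 < t/2 := by linarith
  have hna : (-1:ℝ) < -a := by linarith
  have hnb : (-1:ℝ) < -b := by linarith
  -- integrability on [0, t/2]
  have icont1 : ContinuousOn (fun s : ℝ => (t - s) ^ (-b)) (Set.uIcc 0 (t/2)) := by
    apply ContinuousOn.rpow_const (by fun_prop)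
    intro x hx
    rw [Set.uIcc_of_le hm.le] at hx
    left; nlinarith [hx.2]
  have i1 : IntervalIntegrable (fun s : ℝ => s ^ (-a) * (t - s) ^ (-b)) volume 0 (t/2) :=
    (intervalIntegrable_rpow' hna).mul_continuousOn icont1
  -- integrability on [t/2, t]
  have icont2 : ContinuousOn (fun s : ℝ => s ^ (-a)) (Set.uIcc (t/2) t) := by
    apply ContinuousOn.rpow_const (by fun_prop)
    intro x hx
    rw [Set.uIcc_of_le (by linarith)] at hx
    left; nlinarith [hx.1]
  have isub : IntervalIntegrable (fun s : ℝ => (t - s) ^ (-b)) volume (t/2) t := by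
    have h := ((intervalIntegrable_rpow' (a := 0) (b := t/2) hnb).comp_sub_left t).symm
    have e : t - t/2 = t/2 := by ring
    simpa [e] using h
  have i2 : IntervalIntegrable (fun s : ℝ => s ^ (-a) * (t - s) ^ (-b)) volume (t/2) t :=
    isub.continuousOn_mul icont2
  refine ⟨i1.trans i2, ?_⟩
  rw [← integral_add_adjacent_intervals i1 i2]
  -- first piece
  have ic1 : IntervalIntegrable (fun s : ℝ => s ^ (-a) * (t/2) ^ (-b)) volume 0 (t/2) :=
    (intervalIntegrable_rpow' hna).mul_const _
  have h1 : (∫ s in (0:ℝ)..(t/2), s ^ (-a) * (t - s) ^ (-b)) ≤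
      ∫ s in (0:ℝ)..(t/2), s ^ (-a) * (t/2) ^ (-b) := by
    apply integral_mono_on hm.le i1 ic1
    intro x hx
    have hx0 : 0 ≤ x := hx.1
    have : (t - x) ^ (-b) ≤ (t/2) ^ (-b) :=
      Real.rpow_le_rpow_of_nonpos hm (by linarith [hx.2]) (by linarith)
    exact mul_le_mul_of_nonneg_left this (Real.rpow_nonneg hx0 _)
  have e1 : (∫ s in (0:ℝ)..(t/2), s ^ (-a) * (t/2) ^ (-b))
      = (t/2) ^ (1-a) / (1-a) * (t/2) ^ (-b) := by
    rw [intervalIntegral.integral_mul_const, integral_rpow (Or.inl hna)]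
    rw [Real.zero_rpow (by linarith)]
    ring_nf
  -- second piece
  have ic2 : IntervalIntegrable (fun s : ℝ => (t/2) ^ (-a) * (t - s) ^ (-b)) volume (t/2) t :=
    isub.const_mul _
  have h2 : (∫ s in (t/2)..t, s ^ (-a) * (t - s) ^ (-b)) ≤
      ∫ s in (t/2)..t, (t/2) ^ (-a) * (t - s) ^ (-b) := by
    apply integral_mono_on (by linarith) i2 ic2
    intro x hx
    have : x ^ (-a) ≤ (t/2) ^ (-a) :=
      Real.rpow_le_rpow_of_nonpos hm hx.1 (by linarith)
    have hnn : 0 ≤ (t - x) ^ (-b) := Real.rpow_nonneg (by linarith [hx.2]) _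
    exact mul_le_mul_of_nonneg_right this hnn
  have e2 : (∫ s in (t/2)..t, (t/2) ^ (-a) * (t - s) ^ (-b))
      = (t/2) ^ (-a) * ((t/2) ^ (1-b) / (1-b)) := by
    rw [intervalIntegral.integral_const_mul]
    congr 1
    have := intervalIntegral.integral_comp_sub_left (a := t/2) (b := t) (fun u => u ^ (-b)) t
    rw [this]
    have e : t - t/2 = t/2 := by ring
    rw [e, sub_self, integral_rpow (Or.inl hnb), Real.zero_rpow (by linarith)]
    ring_nf
  have hXY : (t/2) ^ (-a) * (t/2) ^ (1-b) = (t/2) ^ (1-a-b) := by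
    rw [← Real.rpow_add hm]; ring_nf
  have hXY2 : (t/2) ^ (1-a) * (t/2) ^ (-b) = (t/2) ^ (1-a-b) := by
    rw [← Real.rpow_add hm]; ring_nf
  have key : (t/2) ^ (1-a) / (1-a) * (t/2) ^ (-b) + (t/2) ^ (-a) * ((t/2) ^ (1-b) / (1-b))
      = (t/2) ^ (1-a-b) * (1/(1-a) + 1/(1-b)) := by
    calc (t/2) ^ (1-a) / (1-a) * (t/2) ^ (-b) + (t/2) ^ (-a) * ((t/2) ^ (1-b) / (1-b))
        = ((t/2) ^ (1-a) * (t/2) ^ (-b)) * (1/(1-a)) + ((t/2) ^ (-a) * (t/2) ^ (1-b)) * (1/(1-b)) := by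
          ring
      _ = _ := by rw [hXY, hXY2]; ring
  calc (∫ s in (0:ℝ)..(t/2), s ^ (-a) * (t - s) ^ (-b)) +
        ∫ s in (t/2)..t, s ^ (-a) * (t - s) ^ (-b)
      ≤ (t/2) ^ (1-a) / (1-a) * (t/2) ^ (-b) + (t/2) ^ (-a) * ((t/2) ^ (1-b) / (1-b)) := by
        rw [← e1, ← e2]; exact add_le_add h1 h2
    _ = _ := key


private lemma gronwall_exp_aux {x q : ℝ} (hx : 0 < x) (hq0 : 0 ≤ q) (hq1 : q ≤ 1) :
    Real.exp (-x) ≤ x ^ (-q) := by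
  have hxq : 0 < x ^ q := Real.rpow_pos_of_pos hx q
  have h1 : x ^ q ≤ Real.exp x := by
    rcases le_total x 1 with hle | hge
    · have h0 := Real.rpow_le_one hx.le hle hq0
      have h2 : (1:ℝ) ≤ Real.exp x := by nlinarith [Real.add_one_le_exp x]
      linarith
    · have h3 : x ^ q ≤ x ^ (1:ℝ) := Real.rpow_le_rpow_of_exponent_le hge hq1
      rw [Real.rpow_one] at h3
      nlinarith [Real.add_one_le_exp x]
  rw [Real.rpow_neg hx.le, Real.exp_neg]
  exact inv_anti₀ hxq h1

set_option maxHeartbeats 1000000 in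
/-- Discrete Gronwall-type lemma: if `f` is bounded, nonnegative on `[0,T]` and satisfies
`f t ≤ κ + λ t^{a₁} ∫_h^{max(h,t)} f(τ_s) s^{-a₁} (t-s)^{-a₂} ds` with `h = T/N` and
`τ_s = h⌊s/h⌋`, then `sup f ≤ C κ` with `C` depending only on `λ, a₁, a₂, T`. -/
theorem gronwall_type_lemma (T lam a₁ a₂ : ℝ) (hT : 0 < T) (hlam : 0 ≤ lam)
    (ha₁ : a₁ ∈ Set.Ico (0 : ℝ) 1) (ha₂ : a₂ ∈ Set.Ico (0 : ℝ) 1) :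
    ∃ C : ℝ, ∀ (N : ℕ), 0 < N → ∀ κ : ℝ, 0 ≤ κ → ∀ f : ℝ → ℝ,
      (∀ t ∈ Set.Icc (0 : ℝ) T, 0 ≤ f t) →
      (∃ M : ℝ, ∀ t ∈ Set.Icc (0 : ℝ) T, f t ≤ M) →
      (∀ t ∈ Set.Icc (0 : ℝ) T,
        f t ≤ κ + lam * t ^ a₁ *
          ∫ s in (T / N)..(max (T / N) t),
            f (T / N * (⌊s / (T / N)⌋ : ℤ)) * s ^ (-a₁) * (t - s) ^ (-a₂)) →
      ∀ t ∈ Set.Icc (0 : ℝ) T, f t ≤ C * κ := by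
  obtain ⟨ha₁0, ha₁1⟩ := ha₁
  obtain ⟨ha₂0, ha₂1⟩ := ha₂
  set q : ℝ := (1 - a₂) / 2 with hqdef
  have hq0 : 0 < q := by simp only [hqdef]; linarith
  have hq1 : q ≤ 1 := by simp only [hqdef]; linarith
  have hb1 : a₂ + q < 1 := by simp only [hqdef]; linarith
  have hb0 : 0 ≤ a₂ + q := by linarith
  have hE0 : 0 < 1 / (1 - a₁) + 1 / (1 - (a₂ + q)) := by
    have h1 : 0 < 1 - a₁ := by linarith
    have h2 : 0 < 1 - (a₂ + q) := by linarith
    positivity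
  set T' : ℝ := max T 1 with hT'def
  have hT'1 : (1:ℝ) ≤ T' := le_max_right T 1
  have hT'0 : 0 < T' := by linarith
  set K : ℝ := lam * 2 * T' ^ q * (1 / (1 - a₁) + 1 / (1 - (a₂ + q))) with hKdef
  have hK0 : 0 ≤ K := by
    apply mul_nonneg (by positivity) hE0.le
  set μ : ℝ := (2 * K + 1) ^ (1 / q) with hμdef
  have hμ0 : 0 < μ := Real.rpow_pos_of_pos (by linarith) _
  have hμK : K * μ ^ (-q) ≤ 1 / 2 := by
    have hμq : μ ^ (-q) = (2 * K + 1)⁻¹ := by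
      rw [hμdef, ← Real.rpow_mul (by linarith : (0:ℝ) ≤ 2 * K + 1)]
      have he : 1 / q * (-q) = -1 := by field_simp
      rw [he, Real.rpow_neg_one]
    rw [hμq]
    rw [mul_inv_le_iff₀ (by linarith)]
    linarith
  refine ⟨2 * Real.exp (μ * T), ?_⟩
  intro N hN κ hκ f hf0 hMb hineq
  obtain ⟨M, hM⟩ := hMb
  set h : ℝ := T / N with hhdef
  have hh0 : 0 < h := by
    apply div_pos hT
    exact_mod_cast hN
  set G : ℝ → ℝ := fun t => Real.exp (-(μ * t)) * f t with hGdef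
  have hGnn : ∀ t ∈ Icc (0:ℝ) T, 0 ≤ G t := fun t ht =>
    mul_nonneg (Real.exp_nonneg _) (hf0 t ht)
  have hGf : ∀ t, 0 ≤ t → 0 ≤ f t → G t ≤ f t := by
    intro t ht1 ht2
    have h2 : Real.exp (-(μ * t)) ≤ 1 := Real.exp_le_one_iff.mpr (by nlinarith)
    calc G t = Real.exp (-(μ * t)) * f t := rfl
      _ ≤ 1 * f t := mul_le_mul_of_nonneg_right h2 ht2
      _ = f t := one_mul _
  have hbdd : BddAbove (G '' Icc 0 T) := by
    refine ⟨max M 0, ?_⟩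
    rintro x ⟨t, ht, rfl⟩
    exact (hGf t ht.1 (hf0 t ht)).trans ((hM t ht).trans (le_max_left _ _))
  have hne : (G '' Icc 0 T).Nonempty := ⟨G 0, ⟨0, ⟨le_rfl, hT.le⟩, rfl⟩⟩
  set S : ℝ := sSup (G '' Icc 0 T) with hSdef
  have hGle : ∀ t ∈ Icc (0:ℝ) T, G t ≤ S := fun t ht => le_csSup hbdd ⟨t, ht, rfl⟩
  have hS0 : 0 ≤ S := le_trans (hGnn 0 ⟨le_rfl, hT.le⟩) (hGle 0 ⟨le_rfl, hT.le⟩)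
  -- the key pointwise bound
  have key : ∀ t ∈ Icc (0:ℝ) T, G t ≤ κ + S / 2 := by
    intro t ht
    obtain ⟨ht0, htT⟩ := ht
    have hexple : Real.exp (-(μ * t)) ≤ 1 :=
      Real.exp_le_one_iff.mpr (by nlinarith)
    by_cases hth : t ≤ h
    · have hmax : max h t = h := max_eq_left hth
      have h1 := hineq t ⟨ht0, htT⟩
      rw [hmax, intervalIntegral.integral_same, mul_zero, add_zero] at h1
      have := hGf t ht0 (hf0 t ⟨ht0, htT⟩)
      linarith
    · push_neg at hth
      have hmax : max h t = t := max_eq_right hth.le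
      have ht0' : 0 < t := lt_trans hh0 hth
      have h1 := hineq t ⟨ht0, htT⟩
      rw [hmax] at h1
      have hτmem : ∀ s ∈ Icc h t, (h * (⌊s / h⌋ : ℤ) ∈ Icc (0:ℝ) T) ∧ h * (⌊s / h⌋ : ℤ) ≤ s := by
        intro s hs
        have hs0 : 0 < s := lt_of_lt_of_le hh0 hs.1
        have h2 : (⌊s / h⌋ : ℝ) ≤ s / h := Int.floor_le _
        have h3 : h * (⌊s / h⌋ : ℝ) ≤ s := by
          calc h * (⌊s / h⌋ : ℝ) ≤ h * (s / h) :=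
                mul_le_mul_of_nonneg_left h2 hh0.le
            _ = s := by rw [mul_comm, div_mul_cancel₀ _ (ne_of_gt hh0)]
        have h4 : 0 ≤ h * (⌊s / h⌋ : ℝ) := by
          have h5 : (0:ℤ) ≤ ⌊s / h⌋ := Int.floor_nonneg.mpr (div_nonneg hs0.le hh0.le)
          have h6 : (0:ℝ) ≤ (⌊s / h⌋ : ℝ) := by exact_mod_cast h5
          exact mul_nonneg hh0.le h6
        exact ⟨⟨h4, le_trans h3 (le_trans hs.2 htT)⟩, h3⟩
      -- integrability of the kernels on [h, t]
      have hconta : ContinuousOn (fun s : ℝ => s ^ (-a₁)) (Set.uIcc h t) := by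
        apply ContinuousOn.rpow_const (by fun_prop)
        intro x hx
        rw [Set.uIcc_of_le hth.le] at hx
        left; exact ne_of_gt (lt_of_lt_of_le hh0 hx.1)
      have hintb : IntervalIntegrable (fun s : ℝ => (t - s) ^ (-a₂)) volume h t := by
        have hcomp := ((intervalIntegrable_rpow' (a := 0) (b := t - h)
          (by linarith : (-1:ℝ) < -a₂)).comp_sub_left t).symm
        have e : t - (t - h) = h := by ring
        simpa [e] using hcomp
      have hintb' : IntervalIntegrable (fun s : ℝ => (t - s) ^ (-(a₂ + q))) volume h t := by
        have hcomp := ((intervalIntegrable_rpow' (a := 0) (b := t - h)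
          (by linarith : (-1:ℝ) < -(a₂ + q))).comp_sub_left t).symm
        have e : t - (t - h) = h := by ring
        simpa [e] using hcomp
      have hk : IntervalIntegrable (fun s : ℝ => s ^ (-a₁) * (t - s) ^ (-a₂)) volume h t :=
        hintb.continuousOn_mul hconta
      have hk' : IntervalIntegrable (fun s : ℝ => s ^ (-a₁) * (t - s) ^ (-(a₂ + q)))
          volume h t := hintb'.continuousOn_mul hconta
      have hkexp : IntervalIntegrable
          (fun s : ℝ => Real.exp (μ * s) * (s ^ (-a₁) * (t - s) ^ (-a₂))) volume h t :=
        IntervalIntegrable.continuousOn_mul hk (by fun_prop)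
      have hkexp2 : IntervalIntegrable
          (fun s : ℝ => Real.exp (μ * s - μ * t) * (s ^ (-a₁) * (t - s) ^ (-a₂))) volume h t :=
        IntervalIntegrable.continuousOn_mul hk (by fun_prop)
      have hmeasτ : Measurable (fun s : ℝ => f (h * (⌊s / h⌋ : ℤ))) :=
        (measurable_from_top (f := fun n : ℤ => f (h * (n : ℝ)))).comp
          ((measurable_id.div_const h).floor)
      have hknn : ∀ s ∈ Icc h t, 0 ≤ s ^ (-a₁) * (t - s) ^ (-a₂) := by
        intro s hs
        exact mul_nonneg (Real.rpow_nonneg (le_trans hh0.le hs.1) _)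
          (Real.rpow_nonneg (by linarith [hs.2]) _)
      have hfτk : IntervalIntegrable
          (fun s : ℝ => f (h * (⌊s / h⌋ : ℤ)) * s ^ (-a₁) * (t - s) ^ (-a₂)) volume h t := by
        apply IntervalIntegrable.mono_fun' (g := fun s : ℝ =>
          (max M 0) * (s ^ (-a₁) * (t - s) ^ (-a₂))) (hk.const_mul _)
        · exact ((hmeasτ.mul (by fun_prop : Measurable (fun s : ℝ => s ^ (-a₁)))).mul
            (by fun_prop : Measurable (fun s : ℝ => (t - s) ^ (-a₂)))).aestronglyMeasurable
        · rw [Set.uIoc_of_le hth.le]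
          filter_upwards [ae_restrict_mem measurableSet_Ioc] with s hs
          have hs' : s ∈ Icc h t := Ioc_subset_Icc_self hs
          obtain ⟨hτm, _⟩ := hτmem s hs'
          have hf1 : 0 ≤ f (h * (⌊s / h⌋ : ℤ)) := hf0 _ hτm
          have hf2 : f (h * (⌊s / h⌋ : ℤ)) ≤ max M 0 := (hM _ hτm).trans (le_max_left _ _)
          have hknn' := hknn s hs'
          rw [Real.norm_eq_abs, abs_of_nonneg (by rw [mul_assoc]; positivity)]
          rw [mul_assoc]
          exact mul_le_mul_of_nonneg_right hf2 hknn'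
      -- Step 1 : pointwise comparison with S * exp(μ s)
      have hI1 : (∫ s in h..t, f (h * (⌊s / h⌋ : ℤ)) * s ^ (-a₁) * (t - s) ^ (-a₂))
          ≤ S * ∫ s in h..t, Real.exp (μ * s) * (s ^ (-a₁) * (t - s) ^ (-a₂)) := by
        rw [← intervalIntegral.integral_const_mul]
        apply intervalIntegral.integral_mono_on hth.le hfτk (hkexp.const_mul S)
        intro s hs
        obtain ⟨hτm, hτle⟩ := hτmem s hs
        have hfb : f (h * (⌊s / h⌋ : ℤ)) ≤ S * Real.exp (μ * s) := by
          have hGτ : G (h * (⌊s / h⌋ : ℤ)) ≤ S := hGle _ hτm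
          have : f (h * (⌊s / h⌋ : ℤ)) = Real.exp (μ * (h * (⌊s / h⌋ : ℤ))) *
              G (h * (⌊s / h⌋ : ℤ)) := by
            show _ = Real.exp _ * (Real.exp _ * _)
            rw [← mul_assoc, ← Real.exp_add]
            simp
          rw [this]
          calc Real.exp (μ * (h * (⌊s / h⌋ : ℤ))) * G (h * (⌊s / h⌋ : ℤ))
              ≤ Real.exp (μ * (h * (⌊s / h⌋ : ℤ))) * S :=
                mul_le_mul_of_nonneg_left hGτ (Real.exp_nonneg _)
            _ ≤ Real.exp (μ * s) * S := by
                apply mul_le_mul_of_nonneg_right _ hS0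
                exact Real.exp_le_exp.mpr (mul_le_mul_of_nonneg_left hτle hμ0.le)
            _ = S * Real.exp (μ * s) := by ring
        calc f (h * (⌊s / h⌋ : ℤ)) * s ^ (-a₁) * (t - s) ^ (-a₂)
            = f (h * (⌊s / h⌋ : ℤ)) * (s ^ (-a₁) * (t - s) ^ (-a₂)) := by ring
          _ ≤ S * Real.exp (μ * s) * (s ^ (-a₁) * (t - s) ^ (-a₂)) :=
              mul_le_mul_of_nonneg_right hfb (hknn s hs)
          _ = S * (Real.exp (μ * s) * (s ^ (-a₁) * (t - s) ^ (-a₂))) := by ring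
      -- Step 2 : move exp(-(μ t)) inside the integral
      have hJ2 : Real.exp (-(μ * t)) *
            (∫ s in h..t, Real.exp (μ * s) * (s ^ (-a₁) * (t - s) ^ (-a₂)))
          = ∫ s in h..t, Real.exp (μ * s - μ * t) * (s ^ (-a₁) * (t - s) ^ (-a₂)) := by
        rw [← intervalIntegral.integral_const_mul]
        apply intervalIntegral.integral_congr
        intro s _
        dsimp only
        rw [← mul_assoc, ← Real.exp_add, show -(μ * t) + μ * s = μ * s - μ * t from by ring]
      -- Step 3 : kill the exponential using exp(-x) ≤ x^(-q)
      have hns : ∀ᵐ (s : ℝ) ∂(volume : Measure ℝ), s ≠ t := by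
        refine ae_iff.mpr ?_
        simpa using measure_singleton t
      have hJ3 : (∫ s in h..t, Real.exp (μ * s - μ * t) * (s ^ (-a₁) * (t - s) ^ (-a₂)))
          ≤ μ ^ (-q) * ∫ s in h..t, s ^ (-a₁) * (t - s) ^ (-(a₂ + q)) := by
        rw [← intervalIntegral.integral_const_mul]
        apply intervalIntegral.integral_mono_ae_restrict hth.le hkexp2 (hk'.const_mul _)
        filter_upwards [ae_restrict_mem measurableSet_Icc, ae_restrict_of_ae hns] with s hs hsne
        have hs0 : 0 < s := lt_of_lt_of_le hh0 hs.1
        have hts : 0 < t - s := sub_pos.mpr (lt_of_le_of_ne hs.2 hsne)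
        have hexp : Real.exp (μ * s - μ * t) ≤ μ ^ (-q) * (t - s) ^ (-q) := by
          have hx : 0 < μ * (t - s) := mul_pos hμ0 hts
          rw [show μ * s - μ * t = -(μ * (t - s)) from by ring]
          calc Real.exp (-(μ * (t - s))) ≤ (μ * (t - s)) ^ (-q) :=
              gronwall_exp_aux hx hq0.le hq1
            _ = μ ^ (-q) * (t - s) ^ (-q) := Real.mul_rpow hμ0.le hts.le
        calc Real.exp (μ * s - μ * t) * (s ^ (-a₁) * (t - s) ^ (-a₂))
            ≤ μ ^ (-q) * (t - s) ^ (-q) * (s ^ (-a₁) * (t - s) ^ (-a₂)) :=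
              mul_le_mul_of_nonneg_right hexp (hknn s hs)
          _ = μ ^ (-q) * (s ^ (-a₁) * ((t - s) ^ (-q) * (t - s) ^ (-a₂))) := by ring
          _ = μ ^ (-q) * (s ^ (-a₁) * (t - s) ^ (-(a₂ + q))) := by
              rw [← Real.rpow_add hts, show -q + -a₂ = -(a₂ + q) from by ring]
      -- Step 4 : compare with the beta integral over [0, t]
      obtain ⟨hbint, hbbd⟩ := gronwall_beta_aux a₁ (a₂ + q) t ha₁0 ha₁1 hb0 hb1 ht0'
      have hB : (∫ s in h..t, s ^ (-a₁) * (t - s) ^ (-(a₂ + q)))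
          ≤ ∫ s in (0:ℝ)..t, s ^ (-a₁) * (t - s) ^ (-(a₂ + q)) := by
        apply intervalIntegral.integral_mono_interval hh0.le hth.le le_rfl ?_ hbint
        filter_upwards [ae_restrict_mem measurableSet_Ioc] with s hs
        exact mul_nonneg (Real.rpow_nonneg hs.1.le _) (Real.rpow_nonneg (by linarith [hs.2]) _)
      have hexpq : 1 - a₁ - (a₂ + q) = q - a₁ := by rw [hqdef]; ring
      -- Step 5 : the constant is at most K
      have hcoef : lam * t ^ a₁ *
          ((t / 2) ^ (q - a₁) * (1 / (1 - a₁) + 1 / (1 - (a₂ + q)))) ≤ K := by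
        have e1 : t ^ a₁ * (t / 2) ^ (q - a₁) = t ^ q * 2 ^ (a₁ - q) := by
          rw [Real.div_rpow ht0'.le (by norm_num : (0:ℝ) ≤ 2),
            show a₁ - q = -(q - a₁) from by ring,
            Real.rpow_neg (by norm_num : (0:ℝ) ≤ 2), div_eq_mul_inv, ← mul_assoc,
            ← Real.rpow_add ht0', show a₁ + (q - a₁) = q from by ring]
        have e2 : t ^ q ≤ T' ^ q :=
          Real.rpow_le_rpow ht0 (le_trans htT (le_max_left T 1)) hq0.le
        have e3 : (2:ℝ) ^ (a₁ - q) ≤ 2 := by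
          calc (2:ℝ) ^ (a₁ - q) ≤ (2:ℝ) ^ (1:ℝ) :=
              Real.rpow_le_rpow_of_exponent_le one_le_two (by linarith)
            _ = 2 := Real.rpow_one 2
        calc lam * t ^ a₁ * ((t / 2) ^ (q - a₁) * (1 / (1 - a₁) + 1 / (1 - (a₂ + q))))
            = lam * (t ^ a₁ * (t / 2) ^ (q - a₁)) * (1 / (1 - a₁) + 1 / (1 - (a₂ + q))) := by
              ring
          _ = lam * (t ^ q * 2 ^ (a₁ - q)) * (1 / (1 - a₁) + 1 / (1 - (a₂ + q))) := by rw [e1]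
          _ ≤ lam * (T' ^ q * 2) * (1 / (1 - a₁) + 1 / (1 - (a₂ + q))) := by
              apply mul_le_mul_of_nonneg_right _ hE0.le
              apply mul_le_mul_of_nonneg_left _ hlam
              have h2nn : (0:ℝ) ≤ 2 ^ (a₁ - q) := Real.rpow_nonneg (by norm_num) _
              have htq : (0:ℝ) ≤ t ^ q := Real.rpow_nonneg ht0 _
              calc t ^ q * 2 ^ (a₁ - q) ≤ T' ^ q * 2 ^ (a₁ - q) :=
                  mul_le_mul_of_nonneg_right e2 h2nn
                _ ≤ T' ^ q * 2 := mul_le_mul_of_nonneg_left e3 (Real.rpow_nonneg hT'0.le _)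
          _ = K := by rw [hKdef]; ring
      -- assemble everything
      have hμqnn : (0:ℝ) ≤ μ ^ (-q) := Real.rpow_nonneg hμ0.le _
      have hltnn : (0:ℝ) ≤ lam * t ^ a₁ := mul_nonneg hlam (Real.rpow_nonneg ht0 _)
      have c1 : Real.exp (-(μ * t)) *
            (∫ s in h..t, f (h * (⌊s / h⌋ : ℤ)) * s ^ (-a₁) * (t - s) ^ (-a₂))
          ≤ S * (μ ^ (-q) * ((t / 2) ^ (q - a₁) * (1 / (1 - a₁) + 1 / (1 - (a₂ + q))))) := by
        calc Real.exp (-(μ * t)) *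
              (∫ s in h..t, f (h * (⌊s / h⌋ : ℤ)) * s ^ (-a₁) * (t - s) ^ (-a₂))
            ≤ Real.exp (-(μ * t)) *
              (S * ∫ s in h..t, Real.exp (μ * s) * (s ^ (-a₁) * (t - s) ^ (-a₂))) :=
              mul_le_mul_of_nonneg_left hI1 (Real.exp_nonneg _)
          _ = S * (Real.exp (-(μ * t)) *
              ∫ s in h..t, Real.exp (μ * s) * (s ^ (-a₁) * (t - s) ^ (-a₂))) := by ring
          _ = S * ∫ s in h..t, Real.exp (μ * s - μ * t) * (s ^ (-a₁) * (t - s) ^ (-a₂)) := by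
              rw [hJ2]
          _ ≤ S * (μ ^ (-q) * ∫ s in h..t, s ^ (-a₁) * (t - s) ^ (-(a₂ + q))) :=
              mul_le_mul_of_nonneg_left hJ3 hS0
          _ ≤ S * (μ ^ (-q) *
              ((t / 2) ^ (1 - a₁ - (a₂ + q)) * (1 / (1 - a₁) + 1 / (1 - (a₂ + q))))) := by
              apply mul_le_mul_of_nonneg_left _ hS0
              exact mul_le_mul_of_nonneg_left (hB.trans hbbd) hμqnn
          _ = S * (μ ^ (-q) *
              ((t / 2) ^ (q - a₁) * (1 / (1 - a₁) + 1 / (1 - (a₂ + q))))) := by rw [hexpq]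
      have c2 : lam * t ^ a₁ * (Real.exp (-(μ * t)) *
            (∫ s in h..t, f (h * (⌊s / h⌋ : ℤ)) * s ^ (-a₁) * (t - s) ^ (-a₂))) ≤ S / 2 := by
        calc lam * t ^ a₁ * (Real.exp (-(μ * t)) *
              (∫ s in h..t, f (h * (⌊s / h⌋ : ℤ)) * s ^ (-a₁) * (t - s) ^ (-a₂)))
            ≤ lam * t ^ a₁ * (S * (μ ^ (-q) *
              ((t / 2) ^ (q - a₁) * (1 / (1 - a₁) + 1 / (1 - (a₂ + q)))))) :=
              mul_le_mul_of_nonneg_left c1 hltnn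
          _ = S * (μ ^ (-q) * (lam * t ^ a₁ *
              ((t / 2) ^ (q - a₁) * (1 / (1 - a₁) + 1 / (1 - (a₂ + q)))))) := by ring
          _ ≤ S * (μ ^ (-q) * K) :=
              mul_le_mul_of_nonneg_left (mul_le_mul_of_nonneg_left hcoef hμqnn) hS0
          _ = S * (K * μ ^ (-q)) := by ring
          _ ≤ S * (1 / 2) := mul_le_mul_of_nonneg_left hμK hS0
          _ = S / 2 := by ring
      calc G t = Real.exp (-(μ * t)) * f t := rfl
        _ ≤ Real.exp (-(μ * t)) * (κ + lam * t ^ a₁ *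
            ∫ s in h..t, f (h * (⌊s / h⌋ : ℤ)) * s ^ (-a₁) * (t - s) ^ (-a₂)) :=
            mul_le_mul_of_nonneg_left h1 (Real.exp_nonneg _)
        _ = Real.exp (-(μ * t)) * κ + lam * t ^ a₁ * (Real.exp (-(μ * t)) *
            ∫ s in h..t, f (h * (⌊s / h⌋ : ℤ)) * s ^ (-a₁) * (t - s) ^ (-a₂)) := by ring
        _ ≤ κ + S / 2 := by
            have hκb : Real.exp (-(μ * t)) * κ ≤ κ := by nlinarith [hexple]
            linarith [c2]
  have hSle : S ≤ κ + S / 2 := by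
    apply csSup_le hne
    rintro x ⟨t, ht, rfl⟩
    exact key t ht
  have hS2κ : S ≤ 2 * κ := by linarith
  intro t ht
  have hft : f t = Real.exp (μ * t) * G t := by
    rw [hGdef]
    simp only []
    rw [← mul_assoc, ← Real.exp_add]
    simp
  calc f t = Real.exp (μ * t) * G t := hft
    _ ≤ Real.exp (μ * t) * S := mul_le_mul_of_nonneg_left (hGle t ht) (Real.exp_nonneg _)
    _ ≤ Real.exp (μ * T) * (2 * κ) := by
        apply mul_le_mul _ hS2κ hS0 (Real.exp_nonneg _)
        exact Real.exp_le_exp.mpr (by nlinarith [ht.2])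
    _ = 2 * Real.exp (μ * T) * κ := by ring
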